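/- arXiv:2210.10195 — 2 statements merged into one kernel-verified Lean document; each statement's English description precedes it below -/
import Mathlib

section
/- For any finite Markov decision process (S, A, P, R, γ), any stationary policy π : S → Δ(A), and any two probability distributions ρ₁, ρ₂ ∈ Δ(S) over initial states, the performance gap satisfies |V^π(ρ₁) − V^π(ρ₂)| ≤ W_{d^π}(ρ₁, ρ₂), where d^π is the π-bisimulation metric and V^π(ρ) = Σ_s ρ(s) V^π(s). -/
/-!
Weak Kantorovich duality: if `|f x - g y| ≤ d x y + c` for all `x, y`, then the means of `f` and
`g` under `μ` and `ν` differ by at most `W_d(μ, ν) + c`. Let `c` be the largest slack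
`|V s - V t| - dπ s t`. Pushing the slack bound through both fixed-point equations and this duality
shows that `γ c` is also a slack bound, so `c ≤ γ c`, and `γ < 1` forces `c ≤ 0`.
The duality with `c = 0` then gives the theorem.
-/

/-- A probability distribution on a finite set, represented as a nonnegative
function summing to one. -/
def IsProb {X : Type*} [Fintype X] (μ : X → ℝ) : Prop :=
  (∀ x, 0 ≤ μ x) ∧ ∑ x, μ x = 1

/-- A coupling of `μ ∈ Δ(X)` and `ν ∈ Δ(Y)`: a probability distribution on
`X × Y` whose first marginal is `μ` and whose second marginal is `ν`. -/
def IsCoupling {X Y : Type*} [Fintype X] [Fintype Y]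
    (θ : X × Y → ℝ) (μ : X → ℝ) (ν : Y → ℝ) : Prop :=
  IsProb θ ∧ (∀ x, ∑ y, θ (x, y) = μ x) ∧ (∀ y, ∑ x, θ (x, y) = ν y)

/-- The 1-Wasserstein (optimal transport) cost between `μ ∈ Δ(X)` and `ν ∈ Δ(Y)`
with ground cost `d`. -/
noncomputable def Wass {X Y : Type*} [Fintype X] [Fintype Y]
    (d : X → Y → ℝ) (μ : X → ℝ) (ν : Y → ℝ) : ℝ :=
  sInf {c | ∃ θ : X × Y → ℝ, IsCoupling θ μ ν ∧ c = ∑ p : X × Y, θ p * d p.1 p.2}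

/-- `R^π_s = ∑ₐ π(a|s) R(s,a)`, the expected immediate reward of policy `π` at `s`. -/
def Rpi {S A : Type*} [Fintype A] (R : S → A → ℝ) (π : S → A → ℝ) (s : S) : ℝ :=
  ∑ a, π s a * R s a

/-- `P^π_s(s') = ∑ₐ π(a|s) P(s'|s,a)`, the state-transition kernel induced by `π`. -/
def Ppi {S A : Type*} [Fintype A] (P : S → A → S → ℝ) (π : S → A → ℝ) (s s' : S) : ℝ :=
  ∑ a, π s a * P s a s'

/-- The Bellman operator of policy `π`:
`(T V)(s) = R^π_s + γ ∑_{s'} P^π_s(s') V(s')`. -/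
def bellman {S A : Type*} [Fintype S] [Fintype A]
    (γ : ℝ) (R : S → A → ℝ) (P : S → A → S → ℝ) (π : S → A → ℝ)
    (V : S → ℝ) (s : S) : ℝ :=
  Rpi R π s + γ * ∑ s', Ppi P π s s' * V s'

/-- The π-bisimulation operator:
`F(d)(s,t) = |R^π_s − R^π_t| + γ W_d(P^π_s, P^π_t)`. -/
noncomputable def bisimF {S A : Type*} [Fintype S] [Fintype A]
    (γ : ℝ) (R : S → A → ℝ) (P : S → A → S → ℝ) (π : S → A → ℝ)
    (d : S → S → ℝ) (s t : S) : ℝ :=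
  |Rpi R π s - Rpi R π t| + γ * Wass d (Ppi P π s) (Ppi P π t)

open Finset

lemma isCoupling_prod_of_isProb {X Y : Type*} [Fintype X] [Fintype Y]
    {μ : X → ℝ} {ν : Y → ℝ} (hμ : IsProb μ) (hν : IsProb ν) :
    IsCoupling (fun p : X × Y => μ p.1 * ν p.2) μ ν := by
  obtain ⟨hμ0, hμ1⟩ := hμ
  obtain ⟨hν0, hν1⟩ := hν
  refine ⟨⟨fun p => mul_nonneg (hμ0 _) (hν0 _), ?_⟩, fun x => ?_, fun y => ?_⟩
  · simp [Fintype.sum_prod_type, ← mul_sum, hν1, hμ1]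
  · simp [← mul_sum, hν1]
  · simp [← sum_mul, hμ1]

lemma abs_sum_mul_sub_sum_mul_le_wass_add {X Y : Type*} [Fintype X] [Fintype Y]
    {d : X → Y → ℝ} {μ : X → ℝ} {ν : Y → ℝ} (hμ : IsProb μ) (hν : IsProb ν)
    {f : X → ℝ} {g : Y → ℝ} {c : ℝ} (h : ∀ x y, |f x - g y| ≤ d x y + c) :
    |(∑ x, μ x * f x) - ∑ y, ν y * g y| ≤ Wass d μ ν + c := by
  rw [← sub_le_iff_le_add]
  refine le_csInf ⟨_, _, isCoupling_prod_of_isProb hμ hν, rfl⟩ ?_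
  rintro _ ⟨θ, ⟨⟨hθ0, hθ1⟩, hθμ, hθν⟩, rfl⟩
  have hf : ∑ x, μ x * f x = ∑ p : X × Y, θ p * f p.1 := by
    simp only [Fintype.sum_prod_type, ← hθμ, sum_mul]
  have hg : ∑ y, ν y * g y = ∑ p : X × Y, θ p * g p.2 := by
    simp only [Fintype.sum_prod_type_right, ← hθν, sum_mul]
  rw [hf, hg, ← sum_sub_distrib, sub_le_iff_le_add]
  calc |∑ p : X × Y, (θ p * f p.1 - θ p * g p.2)|
      ≤ ∑ p : X × Y, |θ p * f p.1 - θ p * g p.2| := abs_sum_le_sum_abs _ _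
    _ ≤ ∑ p : X × Y, θ p * (d p.1 p.2 + c) := by
        refine sum_le_sum fun p _ => ?_
        rw [← mul_sub, abs_mul, abs_of_nonneg (hθ0 p)]
        exact mul_le_mul_of_nonneg_left (h p.1 p.2) (hθ0 p)
    _ = (∑ p : X × Y, θ p * d p.1 p.2) + c := by
        simp [mul_add, sum_add_distrib, ← sum_mul, hθ1]

lemma isProb_Ppi {S A : Type*} [Fintype S] [Fintype A] {P : S → A → S → ℝ} {π : S → A → ℝ}
    (hP : ∀ s a, IsProb (P s a)) (hπ : ∀ s, IsProb (π s)) (s : S) : IsProb (Ppi P π s) := by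
  refine ⟨fun s' => sum_nonneg fun a _ => mul_nonneg ((hπ s).1 a) ((hP s a).1 s'), ?_⟩
  simp only [Ppi]
  rw [sum_comm]
  simp only [← mul_sum, (hP s _).2, mul_one, (hπ s).2]

lemma abs_sub_le_add_mul_of_isFixedPt {S A : Type*} [Fintype S] [Fintype A]
    {γ : ℝ} (hγ : 0 ≤ γ) {P : S → A → S → ℝ} (hP : ∀ s a, IsProb (P s a))
    {R : S → A → ℝ} {π : S → A → ℝ} (hπ : ∀ s, IsProb (π s))
    {V : S → ℝ} (hV : ∀ s, V s = bellman γ R P π V s)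
    {d : S → S → ℝ} (hd : ∀ s t, d s t = bisimF γ R P π d s t)
    {c : ℝ} (hc : ∀ s t, |V s - V t| ≤ d s t + c) (s t : S) :
    |V s - V t| ≤ d s t + γ * c := by
  have hmean := abs_sum_mul_sub_sum_mul_le_wass_add (d := d)
    (isProb_Ppi hP hπ s) (isProb_Ppi hP hπ t) hc
  calc |V s - V t|
      = |(Rpi R π s - Rpi R π t)
          + γ * ((∑ s', Ppi P π s s' * V s') - ∑ s', Ppi P π t s' * V s')| := by
        rw [hV s, hV t, bellman, bellman]
        ring_nf
    _ ≤ |Rpi R π s - Rpi R π t|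
          + γ * |(∑ s', Ppi P π s s' * V s') - ∑ s', Ppi P π t s' * V s'| := by
        refine (abs_add_le _ _).trans_eq ?_
        rw [abs_mul, abs_of_nonneg hγ]
    _ ≤ |Rpi R π s - Rpi R π t| + γ * (Wass d (Ppi P π s) (Ppi P π t) + c) := by
        gcongr
    _ = d s t + γ * c := by
        rw [hd s t, bisimF]
        ring

lemma nonpos_of_forall_le_mul_of_forall_le {ι : Type*} [Finite ι] {γ : ℝ} (hγ : γ < 1)
    {e : ι → ℝ} (he : ∀ c, (∀ i, e i ≤ c) → ∀ i, e i ≤ γ * c) (i : ι) : e i ≤ 0 := by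
  have : Nonempty ι := ⟨i⟩
  obtain ⟨j, hj⟩ := Finite.exists_max e
  have hjγ : e j ≤ γ * e j := he (e j) hj j
  have : e j ≤ 0 := by nlinarith
  exact (hj i).trans this

theorem abs_value_dist_sub_le_wasserstein_bisim_general {S A : Type*} [Fintype S] [Fintype A]
    (γ : ℝ) (hγ0 : 0 < γ) (hγ1 : γ < 1)
    (P : S → A → S → ℝ) (hP : ∀ s a, IsProb (P s a))
    (R : S → A → ℝ)
    (π : S → A → ℝ) (hπ : ∀ s, IsProb (π s))
    -- `V` is the (unique) fixed point of the Bellman operator of `π`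
    (V : S → ℝ) (hV : ∀ s, V s = bellman γ R P π V s)
    -- `dpi` is the (unique) fixed point of the π-bisimulation operator
    (dpi : S → S → ℝ)
    (hdfix : ∀ s t, dpi s t = bisimF γ R P π dpi s t)
    (ρ₁ ρ₂ : S → ℝ) (hρ₁ : IsProb ρ₁) (hρ₂ : IsProb ρ₂) :
    |(∑ s, ρ₁ s * V s) - ∑ s, ρ₂ s * V s| ≤ Wass dpi ρ₁ ρ₂ := by
  have hslack : ∀ p : S × S, |V p.1 - V p.2| - dpi p.1 p.2 ≤ 0 := by
    refine nonpos_of_forall_le_mul_of_forall_le hγ1 fun c hc p => ?_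
    have := abs_sub_le_add_mul_of_isFixedPt hγ0.le hP hπ hV hdfix
      (fun s t => sub_le_iff_le_add'.mp (hc (s, t))) p.1 p.2
    linarith
  have hV_lip : ∀ s t, |V s - V t| ≤ dpi s t + 0 := fun s t => by
    linarith [hslack (s, t)]
  simpa using abs_sum_mul_sub_sum_mul_le_wass_add hρ₁ hρ₂ hV_lip

/-- for any finite MDP, stationary policy `π`, and initial-state
distributions `ρ₁, ρ₂`, the performance gap satisfies
`|V^π(ρ₁) − V^π(ρ₂)| ≤ W_{d^π}(ρ₁, ρ₂)`. -/
theorem abs_value_dist_sub_le_wasserstein_bisim {S A : Type*} [Fintype S] [Fintype A]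
    (γ : ℝ) (hγ0 : 0 < γ) (hγ1 : γ < 1)
    (P : S → A → S → ℝ) (hP : ∀ s a, IsProb (P s a))
    (R : S → A → ℝ) (hR : ∀ s a, 0 ≤ R s a ∧ R s a ≤ 1 - γ)
    (π : S → A → ℝ) (hπ : ∀ s, IsProb (π s))
    -- `V` is the (unique) fixed point of the Bellman operator of `π`
    (V : S → ℝ) (hV : ∀ s, V s = bellman γ R P π V s)
    -- `dpi` is the (unique) fixed point of the π-bisimulation operator
    (dpi : S → S → ℝ) (hd0 : ∀ s t, 0 ≤ dpi s t)
    (hdfix : ∀ s t, dpi s t = bisimF γ R P π dpi s t)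
    (ρ₁ ρ₂ : S → ℝ) (hρ₁ : IsProb ρ₁) (hρ₂ : IsProb ρ₂) :
    |(∑ s, ρ₁ s * V s) - ∑ s, ρ₂ s * V s| ≤ Wass dpi ρ₁ ρ₂ :=
  abs_value_dist_sub_le_wasserstein_bisim_general γ hγ0 hγ1 P hP R π hπ V hV dpi hdfix ρ₁ ρ₂ hρ₁ hρ₂
end

section
/- Let (S, A, P, R, γ) be a finite Markov decision process and π a stationary policy. Define the value-iteration sequence V_0 ≡ 0, V_{n+1} = T V_n (where T is the Bellman operator for π) and the metric-iteration sequence d_0 ≡ 0, d_{n+1} = F(d_n) (where F is the π-bisimulation operator). Then for every n ≥ 0 and all states s, t ∈ S, |V_n(s) − V_n(t)| ≤ d_n(s, t). -/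
/-!
By induction on `n`. The reward parts of `T V_n(s) - T V_n(t)` and of `d_{n+1}(s, t)` agree, so
it suffices that `|∑ P^π_s V_n - ∑ P^π_t V_n| ≤ W_{d_n}(P^π_s, P^π_t)`. For any coupling `θ` of
the two next-state distributions, the difference of expectations is `∑ θ(x, y) (V_n x - V_n y)`,
which the induction hypothesis bounds by the transport cost `∑ θ(x, y) d_n(x, y)`.
-/

open Finset

lemma IsProb.ppi {S A : Type*} [Fintype S] [Fintype A]
    {P : S → A → S → ℝ} (hP : ∀ s a, IsProb (P s a))
    {π : S → A → ℝ} (hπ : ∀ s, IsProb (π s)) (s : S) : IsProb (Ppi P π s) := by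
  refine ⟨fun s' => sum_nonneg fun a _ => mul_nonneg ((hπ s).1 a) ((hP s a).1 s'), ?_⟩
  calc ∑ s', Ppi P π s s' = ∑ a, π s a * ∑ s', P s a s' := by
        simp only [Ppi, mul_sum]; exact sum_comm
    _ = 1 := by simp only [(hP s _).2, mul_one, (hπ s).2]

section Coupling

variable {X Y : Type*} [Fintype X] [Fintype Y] {μ : X → ℝ} {ν : Y → ℝ}

lemma isCoupling_prod (hμ : IsProb μ) (hν : IsProb ν) :
    IsCoupling (fun p => μ p.1 * ν p.2) μ ν := by
  refine ⟨⟨fun p => mul_nonneg (hμ.1 _) (hν.1 _), ?_⟩, fun x => ?_, fun y => ?_⟩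
  · simp [Fintype.sum_prod_type, ← mul_sum, hμ.2, hν.2]
  · simp [← mul_sum, hν.2]
  · simp [← sum_mul, hμ.2]

lemma IsCoupling.sum_mul_fst {θ : X × Y → ℝ} (hθ : IsCoupling θ μ ν) (f : X → ℝ) :
    ∑ x, μ x * f x = ∑ p, θ p * f p.1 := by
  simp only [Fintype.sum_prod_type, ← sum_mul, hθ.2.1]

lemma IsCoupling.sum_mul_snd {θ : X × Y → ℝ} (hθ : IsCoupling θ μ ν) (g : Y → ℝ) :
    ∑ y, ν y * g y = ∑ p, θ p * g p.2 := by
  simp only [Fintype.sum_prod_type_right, ← sum_mul, hθ.2.2]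

/-- The easy half of Kantorovich–Rubinstein duality. -/
lemma abs_sum_mul_sub_sum_mul_le_wass (hμ : IsProb μ) (hν : IsProb ν)
    {d : X → Y → ℝ} {f : X → ℝ} {g : Y → ℝ} (hfg : ∀ x y, |f x - g y| ≤ d x y) :
    |∑ x, μ x * f x - ∑ y, ν y * g y| ≤ Wass d μ ν := by
  refine le_csInf ⟨_, _, isCoupling_prod hμ hν, rfl⟩ ?_
  rintro _ ⟨θ, hθ, rfl⟩
  rw [hθ.sum_mul_fst, hθ.sum_mul_snd, ← sum_sub_distrib]
  calc |∑ p, (θ p * f p.1 - θ p * g p.2)| ≤ ∑ p, |θ p * (f p.1 - g p.2)| := by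
        simp only [mul_sub]; exact abs_sum_le_sum_abs _ _
    _ ≤ ∑ p, θ p * d p.1 p.2 := by
        gcongr with p
        rw [abs_mul, abs_of_nonneg (hθ.1.1 p)]
        exact mul_le_mul_of_nonneg_left (hfg p.1 p.2) (hθ.1.1 p)

end Coupling

lemma abs_bellman_sub_le_bisimF {S A : Type*} [Fintype S] [Fintype A]
    {γ : ℝ} (hγ : 0 ≤ γ) (R : S → A → ℝ)
    {P : S → A → S → ℝ} (hP : ∀ s a, IsProb (P s a))
    {π : S → A → ℝ} (hπ : ∀ s, IsProb (π s))
    {V : S → ℝ} {d : S → S → ℝ} (hVd : ∀ s t, |V s - V t| ≤ d s t) (s t : S) :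
    |bellman γ R P π V s - bellman γ R P π V t| ≤ bisimF γ R P π d s t := by
  have hW := abs_sum_mul_sub_sum_mul_le_wass (IsProb.ppi hP hπ s) (IsProb.ppi hP hπ t) hVd
  calc |bellman γ R P π V s - bellman γ R P π V t|
      = |(Rpi R π s - Rpi R π t)
          + γ * (∑ x, Ppi P π s x * V x - ∑ y, Ppi P π t y * V y)| := by
        rw [bellman, bellman]; congr 1; ring
    _ ≤ |Rpi R π s - Rpi R π t| + γ * |∑ x, Ppi P π s x * V x - ∑ y, Ppi P π t y * V y| :=
        (abs_add_le _ _).trans_eq (by rw [abs_mul, abs_of_nonneg hγ])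
    _ ≤ bisimF γ R P π d s t := by rw [bisimF]; gcongr

theorem iterates_abs_value_sub_le_bisim_iterate_general {S A : Type*} [Fintype S] [Fintype A]
    (γ : ℝ) (hγ0 : 0 < γ)
    (P : S → A → S → ℝ) (hP : ∀ s a, IsProb (P s a))
    (R : S → A → ℝ)
    (π : S → A → ℝ) (hπ : ∀ s, IsProb (π s))
    (V : ℕ → S → ℝ) (hV0 : ∀ s, V 0 s = 0)
    (hVsucc : ∀ n s, V (n + 1) s = bellman γ R P π (V n) s)
    (d : ℕ → S → S → ℝ) (hd0 : ∀ s t, d 0 s t = 0)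
    (hdsucc : ∀ n s t, d (n + 1) s t = bisimF γ R P π (d n) s t) :
    ∀ n s t, |V n s - V n t| ≤ d n s t := by
  intro n
  induction n with
  | zero => simp [hV0, hd0]
  | succ n ih =>
    intro s t
    rw [hVsucc, hVsucc, hdsucc]
    exact abs_bellman_sub_le_bisimF hγ0.le R hP hπ ih s t

/-- along value iteration `V₀ ≡ 0`, `V_{n+1} = T V_n` and metric
iteration `d₀ ≡ 0`, `d_{n+1} = F(d_n)`, we have `|V_n(s) − V_n(t)| ≤ d_n(s,t)`
for all `n` and all states `s, t`. -/
theorem iterates_abs_value_sub_le_bisim_iterate {S A : Type*} [Fintype S] [Fintype A]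
    (γ : ℝ) (hγ0 : 0 < γ) (hγ1 : γ < 1)
    (P : S → A → S → ℝ) (hP : ∀ s a, IsProb (P s a))
    (R : S → A → ℝ) (hR : ∀ s a, 0 ≤ R s a ∧ R s a ≤ 1 - γ)
    (π : S → A → ℝ) (hπ : ∀ s, IsProb (π s))
    (V : ℕ → S → ℝ) (hV0 : ∀ s, V 0 s = 0)
    (hVsucc : ∀ n s, V (n + 1) s = bellman γ R P π (V n) s)
    (d : ℕ → S → S → ℝ) (hd0 : ∀ s t, d 0 s t = 0)
    (hdsucc : ∀ n s t, d (n + 1) s t = bisimF γ R P π (d n) s t) :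
    ∀ n s t, |V n s - V n t| ≤ d n s t :=
  iterates_abs_value_sub_le_bisim_iterate_general γ hγ0 P hP R π hπ V hV0 hVsucc d hd0 hdsucc
end
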